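/- arXiv:0705.3453 — 2 statements merged into one kernel-verified Lean document; each statement's English description precedes it below -/
import Mathlib

section
/- For a connected oriented ribbon graph encoded by permutations (σ₀, σ₁, σ₂) on {1,…,2n} with σ₁ a fixed-point-free involution with n orbits and σ₂ = σ₁σ₀⁻¹, the Euler characteristic V - E + F = (number of orbits of σ₀) - n + (number of orbits of σ₂) is even, so the genus g = (2 - V + E - F)/2 is a nonnegative integer. -/
open Equiv

noncomputable def orbitCount {α : Type*} (σ : Equiv.Perm α) : ℕ :=
  Nat.card (MulAction.orbitRel.Quotient (Subgroup.zpowers σ) α)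

/-!
A permutation of `N` points with `c` cycles is a product of `N - c` transpositions, so `σ₁` is a
product of `n` transpositions, and multiplying them onto `σ₀⁻¹` one at a time leads to `σ₂`.
Multiplying by a transposition `(a b)` splits the cycle through `a` and `b` if there is one and
merges the cycles of `a` and `b` otherwise, so the number of cycles changes by exactly one at each
step; this gives the parity of `V - n + F`.

For the bound, let `Hₖ` be the group generated by `σ₀` and the first `k` transpositions, so that
the current permutation `ρₖ` lies in `Hₖ`. The next transposition merges at most two `Hₖ`-orbits,
and when it does, `a` and `b` lie in different cycles of `ρₖ`, which merge as well. Hence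
`cycles(ρₖ) - 2 · orbits(Hₖ) - k` never increases. It starts at `V - 2V` and, by connectivity,
ends at least at `F - 2 - n`, so `V + F ≤ n + 2`.
-/

open MulAction Subgroup

namespace Setoid

variable {α : Type*} {r s : Setoid α}

theorem rel_swap_apply [DecidableEq α] {a b : α} (h : r a b) (x : α) : r (swap a b x) x := by
  rcases eq_or_ne x a with rfl | hxa
  · simpa using r.symm h
  rcases eq_or_ne x b with rfl | hxb
  · simpa using h
  · rw [swap_apply_of_ne_of_ne hxa hxb]

/-- `ker (r.mkMerge a b)` is `r` with the classes of `a` and `b` merged into one. -/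
noncomputable def mkMerge (r : Setoid α) (a b : α) (x : α) : Quotient r :=
  open Classical in if r x b then ⟦a⟧ else ⟦x⟧

theorem mkMerge_of_not_rel {a b x : α} (h : ¬r x b) : r.mkMerge a b x = ⟦x⟧ := if_neg h

theorem mkMerge_eq_of_rel {a b x y : α} (h : r x y) : r.mkMerge a b x = r.mkMerge a b y := by
  have hb : r x b ↔ r y b := ⟨r.trans (r.symm h), r.trans h⟩
  unfold mkMerge
  split_ifs with hx hy hy
  exacts [rfl, absurd (hb.mp hx) hy, absurd (hb.mpr hy) hx, Quotient.sound h]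

theorem mkMerge_swap [DecidableEq α] (a b x : α) :
    r.mkMerge a b (swap a b x) = r.mkMerge a b x := by
  unfold mkMerge
  rcases eq_or_ne x a with rfl | hxa
  · simp
  rcases eq_or_ne x b with rfl | hxb
  · simp
  · rw [swap_apply_of_ne_of_ne hxa hxb]

noncomputable def dropClass (hrs : r ≤ s) (b : α) (q : Quotient r) : Option (Quotient s) :=
  open Classical in if q = ⟦b⟧ then none else some (Quotient.map' id (fun _ _ h => hrs h) q)

theorem dropClass_injective {a b : α} (hrs : r ≤ s) (hs : s ≤ ker (r.mkMerge a b)) :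
    Function.Injective (dropClass hrs b) := by
  refine Quotient.ind₂ fun x y hxy => ?_
  unfold dropClass at hxy
  split_ifs at hxy with hx hy hy
  · rw [hx, hy]
  · have hxb : ¬r x b := fun h => hx (Quotient.sound h)
    have hyb : ¬r y b := fun h => hy (Quotient.sound h)
    simpa [mkMerge_of_not_rel hxb, mkMerge_of_not_rel hyb] using
      hs (Quotient.exact (Option.some.inj hxy))

theorem dropClass_surjective {a b : α} (hrs : r ≤ s) (hab : s a b) (hab' : ¬r a b) :
    Function.Surjective (dropClass hrs b) := by
  rintro (_ | q)
  · exact ⟨⟦b⟧, if_pos rfl⟩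
  induction q using Quotient.ind with | _ y => ?_
  by_cases hy : r y b
  · refine ⟨⟦a⟧, ?_⟩
    rw [dropClass, if_neg fun h => hab' (Quotient.exact h)]
    exact congrArg some (Quotient.sound (s.trans hab (s.symm (hrs hy))))
  · exact ⟨⟦y⟧, if_neg fun h => hy (Quotient.exact h)⟩

variable [Finite α]

theorem card_quotient_le_of_le (hrs : r ≤ s) : Nat.card (Quotient s) ≤ Nat.card (Quotient r) :=
  Nat.card_le_card_of_surjective (Quotient.map' id fun _ _ h => hrs h)
    (Quotient.ind fun x => ⟨⟦x⟧, rfl⟩)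

theorem card_quotient_le_card_add_one {a b : α} (hrs : r ≤ s) (hs : s ≤ ker (r.mkMerge a b)) :
    Nat.card (Quotient r) ≤ Nat.card (Quotient s) + 1 := by
  rw [← Finite.card_option]
  exact Nat.card_le_card_of_injective _ (dropClass_injective hrs hs)

theorem card_quotient_eq_card_add_one {a b : α} (hrs : r ≤ s) (hs : s ≤ ker (r.mkMerge a b))
    (hab : s a b) (hab' : ¬r a b) : Nat.card (Quotient r) = Nat.card (Quotient s) + 1 := by
  rw [← Finite.card_option]
  exact Nat.card_eq_of_bijective _ ⟨dropClass_injective hrs hs, dropClass_surjective hrs hab hab'⟩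

end Setoid

namespace MulAction

variable {G α β : Type*} [Group G] [MulAction G α]

theorem orbitRel_mono {H K : Subgroup G} (h : H ≤ K) : orbitRel H α ≤ orbitRel K α := by
  rintro x y ⟨⟨g, hg⟩, rfl⟩
  exact ⟨⟨g, h hg⟩, rfl⟩

theorem orbitRel_closure_le_ker {S : Set G} {f : α → β} (hf : ∀ g ∈ S, ∀ x, f (g • x) = f x) :
    orbitRel (closure S) α ≤ Setoid.ker f := by
  have key : ∀ g ∈ closure S, ∀ x, f (g • x) = f x := by
    intro g hg
    induction hg using closure_induction with
    | mem g hg => exact hf g hg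
    | one => simp
    | mul g h _ _ hg hh => intro x; rw [mul_smul, hg, hh]
    | inv g _ hg => intro x; rw [← hg (g⁻¹ • x), smul_inv_smul]
  rintro _ y ⟨⟨g, hg⟩, rfl⟩
  exact key g hg y

theorem card_orbitRel_quotient_le_one [Finite α] {H : Subgroup G}
    (h : ∀ x y : α, ∃ g ∈ H, g • x = y) : Nat.card (orbitRel.Quotient H α) ≤ 1 := by
  refine Finite.card_le_one_iff_subsingleton.mpr ⟨Quotient.ind₂ fun x y => Quotient.sound ?_⟩
  obtain ⟨g, hg, rfl⟩ := h y x
  exact ⟨⟨g, hg⟩, rfl⟩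

end MulAction

namespace Equiv.Perm

variable {α : Type*} {σ : Perm α}

theorem orbitRel_zpowers_iff {x y : α} : orbitRel (zpowers σ) α x y ↔ σ.SameCycle y x := by
  constructor
  · rintro ⟨⟨_, k, rfl⟩, h⟩
    exact ⟨k, h⟩
  · rintro ⟨k, h⟩
    exact ⟨⟨σ ^ k, k, rfl⟩, h⟩

theorem orbitRel_zpowers_le_ker {β : Type*} {f : α → β} (hf : ∀ x, f (σ x) = f x) :
    orbitRel (zpowers σ) α ≤ Setoid.ker f := by
  rw [zpowers_eq_closure]
  exact orbitRel_closure_le_ker (by simpa using hf)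

theorem orbitCount_inv (σ : Perm α) : orbitCount σ⁻¹ = orbitCount σ := by
  rw [orbitCount, zpowers_inv, orbitCount]

theorem orbitCount_one : orbitCount (1 : Perm α) = Nat.card α := by
  refine (Nat.card_eq_of_bijective (Quotient.mk _) ⟨fun x y hxy => ?_, Quotient.mk_surjective⟩).symm
  exact (sameCycle_one.mp (orbitRel_zpowers_iff.mp (Quotient.exact hxy))).symm

theorem sameCycle_of_apply_eq_succ {f : ℕ → α} {m : ℕ}
    (hstep : ∀ j, j + 1 < m → σ (f j) = f (j + 1)) {j : ℕ} (hj : j < m) :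
    σ.SameCycle (f 0) (f j) := by
  induction j with
  | zero => exact SameCycle.refl _ _
  | succ j ih =>
    rw [← hstep j hj]
    exact (ih (by omega)).trans (SameCycle.refl _ _).apply_right

variable [Finite α]

theorem SameCycle.exists_lt_of_cyclic {f : ℕ → α} {m : ℕ} (hm : 0 < m)
    (hstep : ∀ j, j + 1 < m → σ (f j) = f (j + 1)) (hlast : σ (f (m - 1)) = f 0) {y : α}
    (h : σ.SameCycle (f 0) y) : ∃ j < m, f j = y := by
  have hmaps : Set.MapsTo σ (f '' Set.Iio m) (f '' Set.Iio m) := by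
    rintro _ ⟨j, hj, rfl⟩
    by_cases hjm : j + 1 < m
    · exact ⟨j + 1, hjm, (hstep j hjm).symm⟩
    · obtain rfl : j = m - 1 := by simp only [Set.mem_Iio] at hj; omega
      exact ⟨0, hm, hlast.symm⟩
  obtain ⟨i, rfl⟩ := h.exists_nat_pow_eq
  exact hmaps.perm_pow i (Set.mem_image_of_mem f hm)

variable [DecidableEq α] {a b : α}

theorem sameCycle_swap_mul_iff (hab : a ≠ b) :
    (swap a b * σ).SameCycle a b ↔ ¬σ.SameCycle a b := by
  classical
  -- Follow `a` under `σ` up to its first return `m` to `{a, b}`; along this arc `swap a b * σ`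
  -- agrees with `σ`. If `(σ ^ m) a = a`, the arc is the `σ`-cycle of `a`, which misses `b`, and
  -- `swap a b * σ` continues from it to `b`. If `(σ ^ m) a = b`, then `swap a b * σ` closes the
  -- arc back to `a` instead.
  have hex : ∃ m, 0 < m ∧ (σ ^ m) a ∈ ({a, b} : Set α) :=
    ⟨orderOf σ, orderOf_pos σ, by simp [pow_orderOf_eq_one]⟩
  set m := Nat.find hex
  obtain ⟨hm0, hm⟩ : 0 < m ∧ (σ ^ m) a ∈ ({a, b} : Set α) := Nat.find_spec hex
  have hmin : ∀ j, 0 < j → j < m → (σ ^ j) a ≠ a ∧ (σ ^ j) a ≠ b := fun j hj hjm => by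
    simpa [not_or] using fun h => Nat.find_min hex hjm ⟨hj, h⟩
  have hσ_step : ∀ j, σ ((σ ^ j) a) = (σ ^ (j + 1)) a := fun j => by
    rw [pow_succ', Perm.mul_apply]
  have hτ_step : ∀ j, j + 1 < m → (swap a b * σ) ((σ ^ j) a) = (σ ^ (j + 1)) a := fun j hj => by
    rw [Perm.mul_apply, hσ_step, swap_apply_of_ne_of_ne (hmin _ j.succ_pos hj).1
      (hmin _ j.succ_pos hj).2]
  have hτ_last : (swap a b * σ) ((σ ^ (m - 1)) a) = swap a b ((σ ^ m) a) := by
    rw [Perm.mul_apply, hσ_step, Nat.sub_add_cancel hm0]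
  have not_sameCycle : ∀ g : Perm α, (∀ j, j + 1 < m → g ((σ ^ j) a) = (σ ^ (j + 1)) a) →
      g ((σ ^ (m - 1)) a) = a → ¬g.SameCycle a b := by
    intro g hg hlast hgab
    obtain ⟨_ | j, hj, hjb⟩ :=
      SameCycle.exists_lt_of_cyclic (f := fun j => (σ ^ j) a) hm0 hg hlast hgab
    · exact hab hjb
    · exact (hmin _ j.succ_pos hj).2 hjb
  rcases hm with hma | hmb
  · refine iff_of_true ?_ (not_sameCycle σ (fun j _ => hσ_step j) ?_)
    · have := (sameCycle_of_apply_eq_succ (f := fun j => (σ ^ j) a) hτ_step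
        (Nat.sub_lt hm0 one_pos)).trans (SameCycle.refl _ _).apply_right
      rwa [hτ_last, hma, swap_apply_left] at this
    · rw [hσ_step, Nat.sub_add_cancel hm0, hma]
  · refine iff_of_false (not_sameCycle _ hτ_step ?_) (not_not_intro ⟨m, ?_⟩)
    · rw [hτ_last, hmb, swap_apply_right]
    · rw [zpow_natCast, hmb]

theorem orbitCount_swap_mul_of_sameCycle (hab : a ≠ b) (h : σ.SameCycle a b) :
    orbitCount (swap a b * σ) = orbitCount σ + 1 := by
  set r := orbitRel (zpowers (swap a b * σ)) α
  set s := orbitRel (zpowers σ) α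
  have hrs : r ≤ s := by
    refine (orbitRel_zpowers_le_ker fun x => Quotient.sound (orbitRel_zpowers_iff.mpr ?_)).trans
      (Setoid.ker_mk_eq s).le
    exact (SameCycle.refl σ x).apply_right.trans
      (Setoid.rel_swap_apply (r := SameCycle.setoid σ) h (σ x)).symm
  have hs : s ≤ Setoid.ker (r.mkMerge a b) := by
    refine orbitRel_zpowers_le_ker fun x => ?_
    rw [← swap_mul_self_mul a b σ, Perm.mul_apply, Setoid.mkMerge_swap]
    exact Setoid.mkMerge_eq_of_rel (orbitRel_zpowers_iff.mpr (SameCycle.refl _ x).apply_right)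
  exact Setoid.card_quotient_eq_card_add_one hrs hs (orbitRel_zpowers_iff.mpr h.symm)
    fun hr => (sameCycle_swap_mul_iff hab).mp (orbitRel_zpowers_iff.mp hr).symm h

theorem orbitCount_swap_mul_add_one_of_not_sameCycle (h : ¬σ.SameCycle a b) :
    orbitCount (swap a b * σ) + 1 = orbitCount σ := by
  have hab : a ≠ b := fun hab => h (hab ▸ SameCycle.refl σ a)
  have := orbitCount_swap_mul_of_sameCycle hab ((sameCycle_swap_mul_iff hab).mpr h)
  rwa [swap_mul_self_mul, eq_comm] at this

theorem orbitCount_swap_mul_add_one_modEq (hab : a ≠ b) :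
    orbitCount (swap a b * σ) + 1 ≡ orbitCount σ [MOD 2] := by
  by_cases h : σ.SameCycle a b
  · rw [orbitCount_swap_mul_of_sameCycle hab h, Nat.ModEq, add_assoc, Nat.add_mod_right]
  · rw [orbitCount_swap_mul_add_one_of_not_sameCycle h]

theorem orbitCount_swap_mul_le (hab : a ≠ b) : orbitCount (swap a b * σ) ≤ orbitCount σ + 1 := by
  by_cases h : σ.SameCycle a b
  · exact (orbitCount_swap_mul_of_sameCycle hab h).le
  · have := orbitCount_swap_mul_add_one_of_not_sameCycle h
    omega

theorem orbitCount_swap_mul_add_card_le {H : Subgroup (Perm α)} {ρ : Perm α} (hρ : ρ ∈ H)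
    (hab : a ≠ b) :
    orbitCount (swap a b * ρ) + 2 * Nat.card (orbitRel.Quotient H α) ≤
      orbitCount ρ + 2 * Nat.card (orbitRel.Quotient ↥(H ⊔ closure {swap a b}) α) + 1 := by
  have hK : H ⊔ closure {swap a b} = closure (H ∪ {swap a b}) := by
    rw [Subgroup.closure_union, closure_eq]
  have hH : ∀ g ∈ H, ∀ x, orbitRel H α (g x) x := fun g hg x => ⟨⟨g, hg⟩, rfl⟩
  by_cases hrel : orbitRel H α a b
  · have hKH : orbitRel ↥(H ⊔ closure {swap a b}) α ≤ orbitRel H α := by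
      rw [hK, ← Setoid.ker_mk_eq (orbitRel H α)]
      refine orbitRel_closure_le_ker ?_
      rintro g (hg | rfl) x
      exacts [Quotient.sound (hH g hg x), Quotient.sound (Setoid.rel_swap_apply hrel x)]
    have : Nat.card (orbitRel.Quotient H α) ≤
        Nat.card (orbitRel.Quotient ↥(H ⊔ closure {swap a b}) α) :=
      Setoid.card_quotient_le_of_le hKH
    have := orbitCount_swap_mul_le (σ := ρ) hab
    omega
  · have hKmerge :
        orbitRel ↥(H ⊔ closure {swap a b}) α ≤ Setoid.ker ((orbitRel H α).mkMerge a b) := by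
      rw [hK]
      refine orbitRel_closure_le_ker ?_
      rintro g (hg | rfl) x
      exacts [Setoid.mkMerge_eq_of_rel (hH g hg x), Setoid.mkMerge_swap a b x]
    have : Nat.card (orbitRel.Quotient H α) ≤
        Nat.card (orbitRel.Quotient ↥(H ⊔ closure {swap a b}) α) + 1 :=
      Setoid.card_quotient_le_card_add_one (orbitRel_mono le_sup_left) hKmerge
    have := orbitCount_swap_mul_add_one_of_not_sameCycle (σ := ρ) (a := a) (b := b)
      fun ⟨k, hk⟩ => hrel ⟨⟨(ρ ^ k)⁻¹, inv_mem (zpow_mem hρ k)⟩, by simp [← hk]⟩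
    omega

theorem orbitCount_list_prod_mul_add_card_le {l : List (Perm α)} (hl : ∀ t ∈ l, t.IsSwap)
    {H : Subgroup (Perm α)} {ρ : Perm α} (hρ : ρ ∈ H) :
    orbitCount (l.prod * ρ) + 2 * Nat.card (orbitRel.Quotient H α) ≤
      orbitCount ρ + 2 * Nat.card (orbitRel.Quotient ↥(H ⊔ closure {t | t ∈ l}) α) +
        l.length := by
  induction l with
  | nil =>
    have : {t : Perm α | t ∈ ([] : List (Perm α))} = ∅ := by ext; simp
    rw [this, Subgroup.closure_empty, sup_bot_eq]
    simp
  | cons t l ih =>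
    obtain ⟨a, b, hab, rfl⟩ := hl t List.mem_cons_self
    have ih := ih fun t ht => hl t (List.mem_cons_of_mem _ ht)
    have hmem : l.prod * ρ ∈ H ⊔ closure {t | t ∈ l} := mul_mem
      (mem_sup_right (Subgroup.list_prod_mem _ fun t ht => subset_closure ht)) (mem_sup_left hρ)
    have hstep := orbitCount_swap_mul_add_card_le hmem hab
    have hsup : H ⊔ closure {t | t ∈ l} ⊔ closure {swap a b} =
        H ⊔ closure {t | t ∈ swap a b :: l} := by
      rw [sup_assoc, ← Subgroup.closure_union]
      congr 2
      ext t
      simp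
    rw [hsup] at hstep
    rw [List.prod_cons, mul_assoc, List.length_cons]
    omega

theorem orbitCount_list_prod_mul_add_length_modEq {l : List (Perm α)} (hl : ∀ t ∈ l, t.IsSwap)
    (ρ : Perm α) : orbitCount (l.prod * ρ) + l.length ≡ orbitCount ρ [MOD 2] := by
  induction l with
  | nil => simp [Nat.ModEq.refl]
  | cons t l ih =>
    obtain ⟨a, b, hab, rfl⟩ := hl t List.mem_cons_self
    have ih := ih fun t ht => hl t (List.mem_cons_of_mem _ ht)
    rw [List.prod_cons, mul_assoc, List.length_cons, ← add_assoc, add_right_comm]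
    exact ((orbitCount_swap_mul_add_one_modEq hab).add_right l.length).trans ih

theorem exists_list_isSwap_prod_eq (π : Perm α) :
    ∃ l : List (Perm α), (∀ t ∈ l, t.IsSwap) ∧ l.prod = π ∧
      l.length + orbitCount π = Nat.card α := by
  have := Fintype.ofFinite α
  induction hπ : π.support.card using Nat.strong_induction_on generalizing π with
  | _ k ih =>
  rcases eq_or_ne π 1 with rfl | hπ1
  · exact ⟨[], by simp, rfl, by simp [orbitCount_one]⟩
  obtain ⟨x, hx⟩ : ∃ x, π x ≠ x := by simpa [Equiv.ext_iff] using hπ1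
  obtain ⟨l, hl, hprod, hlen⟩ := ih _ (hπ ▸ card_support_swap_mul hx) (swap x (π x) * π) rfl
  refine ⟨swap x (π x) :: l, List.forall_mem_cons.mpr ⟨⟨x, π x, hx.symm, rfl⟩, hl⟩, ?_, ?_⟩
  · rw [List.prod_cons, hprod, swap_mul_self_mul]
  · rw [orbitCount_swap_mul_of_sameCycle hx.symm (SameCycle.refl π x).apply_right] at hlen
    rw [List.length_cons, ← hlen]
    ring

end Equiv.Perm

theorem ribbon_graph_genus_general (n : ℕ) (σ₀ σ₁ σ₂ : Equiv.Perm (Fin (2 * n)))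
    (horb : orbitCount σ₁ = n)
    (h2 : σ₂ = σ₁ * σ₀⁻¹)
    (hconn : ∀ x y : Fin (2 * n), ∃ p ∈ Subgroup.closure {σ₀, σ₁}, p x = y) :
    ∃ g : ℕ, (orbitCount σ₀ : ℤ) - n + orbitCount σ₂ = 2 - 2 * g := by
  obtain ⟨l, hl, hprod, hlen⟩ := Perm.exists_list_isSwap_prod_eq σ₁
  rw [Nat.card_fin, horb] at hlen
  have hconn' :
      Nat.card (orbitRel.Quotient ↥(zpowers σ₀ ⊔ closure {t | t ∈ l}) (Fin (2 * n))) ≤ 1 := by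
    refine card_orbitRel_quotient_le_one fun x y => ?_
    obtain ⟨p, hp, hpxy⟩ := hconn x y
    refine ⟨p, (closure_le _).mpr ?_ hp, hpxy⟩
    rintro _ (rfl | rfl)
    · exact mem_sup_left (mem_zpowers _)
    · exact mem_sup_right (hprod ▸ Subgroup.list_prod_mem _ fun t ht => subset_closure ht)
  have hle := Perm.orbitCount_list_prod_mul_add_card_le hl (inv_mem (mem_zpowers σ₀))
  have hmod := Perm.orbitCount_list_prod_mul_add_length_modEq hl σ₀⁻¹
  rw [hprod, ← h2, Perm.orbitCount_inv] at hle hmod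
  change orbitCount σ₂ + 2 * orbitCount σ₀ ≤ _ at hle
  refine ⟨(n + 2 - orbitCount σ₀ - orbitCount σ₂) / 2, ?_⟩
  unfold Nat.ModEq at hmod
  omega

/-- For a connected combinatorial map `(σ₀, σ₁, σ₂)` on `{1,…,2n}` with `σ₁` a
fixed-point-free involution with `n` orbits and `σ₂ = σ₁ σ₀⁻¹`, the Euler characteristic
`V - E + F` equals `2 - 2g` for a nonnegative integer `g` (the genus). -/
theorem ribbon_graph_genus (n : ℕ) (σ₀ σ₁ σ₂ : Equiv.Perm (Fin (2 * n)))
    (hinv : σ₁ * σ₁ = 1) (hfpf : ∀ i, σ₁ i ≠ i) (horb : orbitCount σ₁ = n)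
    (h2 : σ₂ = σ₁ * σ₀⁻¹)
    (hconn : ∀ x y : Fin (2 * n), ∃ p ∈ Subgroup.closure {σ₀, σ₁}, p x = y) :
    ∃ g : ℕ, (orbitCount σ₀ : ℤ) - n + orbitCount σ₂ = 2 - 2 * g :=
  ribbon_graph_genus_general n σ₀ σ₁ σ₂ horb h2 hconn
end

section
/- Let 𝔾 be the all-A ribbon graph of a connected link diagram D with genus g(𝔾). Every quasi-tree ℚ of 𝔾 satisfies 0 ≤ g(ℚ) ≤ g(𝔾). Consequently, any chain complex whose generators are quasi-trees bigraded with v(ℚ) = -g(ℚ) has homology supported in at most g(𝔾)+1 values of v; in particular the reduced Khovanov homology of D has homological thickness at most g(𝔾)+1. -/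
open Equiv

abbrev HalfEdge (n : ℕ) := Fin n × Bool

/-- The permutation of half-edges that flips the two half-edges of each edge in `H`. -/
def flipOn (n : ℕ) (H : Finset (Fin n)) : Equiv.Perm (HalfEdge n) :=
  Function.Involutive.toPerm
    (fun p => if p.1 ∈ H then (p.1, !p.2) else p)
    (by intro p; by_cases h : p.1 ∈ H <;> simp [h])

/-- Number of faces of the spanning ribbon subgraph with edge set `H` of the ribbon
graph with vertex permutation `σ₀`. -/
noncomputable def faceCount {n : ℕ} (σ₀ : Equiv.Perm (HalfEdge n)) (H : Finset (Fin n)) : ℕ :=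
  orbitCount (σ₀ * flipOn n H)

/-- The all-A ribbon graph of a connected link diagram is connected: the group generated
by the vertex permutation `σ₀` and the edge involution acts transitively on half-edges. -/
def RibbonConnected {n : ℕ} (σ₀ : Equiv.Perm (HalfEdge n)) : Prop :=
  ∀ x y : HalfEdge n, ∃ p ∈ Subgroup.closure {σ₀, flipOn n Finset.univ}, p x = y

/-!
Multiplying a permutation by a transposition `(a b)` changes its number of cycles by exactly
one: the cycle through `a` and `b` splits if they share one, and their two cycles merge
otherwise; indeed both permutations have the same orbits once the classes of `a` and `b` are
glued. Since `flipOn n H` is a product of `|H|` disjoint transpositions, the face count of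
the spanning subgraph `H` differs from `V(𝔾)` by at most `|H|` and has the parity of `V(𝔾) + |H|`.
For a quasi-tree `Q` this gives `0 ≤ 2 g(Q) = 1 - V(𝔾) + |Q|`, and going from `Q` to all edges
by flipping the `|Qᶜ|` remaining ones gives `F(𝔾) ≤ 1 + |Qᶜ|`, which is `g(Q) ≤ g(𝔾)`.
Hence `v(Q) = -g(Q)` ranges over the `g(𝔾) + 1` integers of `[-g(𝔾), 0]`.
-/

namespace Setoid

variable {α : Type*}

open Classical in
/-- `r` with the classes of `a` and `b` glued: the kernel of the map sending the class of `b`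
to that of `a`. -/
noncomputable def merge (r : Setoid α) (a b : α) : Setoid α :=
  ker fun x => if r x b then Quotient.mk r a else Quotient.mk r x

variable {r s : Setoid α} {a b : α}

open Classical in
theorem merge_iff {x y : α} : r.merge a b x y ↔
    (if r x b then Quotient.mk r a else Quotient.mk r x) =
      (if r y b then Quotient.mk r a else Quotient.mk r y) :=
  ker_def

theorem le_merge : r ≤ r.merge a b := by
  intro x y hxy
  have hb : r x b ↔ r y b := ⟨r.trans (r.symm hxy), r.trans hxy⟩
  rw [merge_iff, Quotient.sound hxy]
  split_ifs with hx hy hy <;> first | rfl | exact absurd (hb.1 hx) hy | exact absurd (hb.2 hy) hx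

theorem merge_rel : r.merge a b a b := by
  rw [merge_iff, if_pos (r.refl b)]
  split_ifs <;> rfl

theorem merge_le (hr : r ≤ s) (hab : s a b) : r.merge a b ≤ s := by
  intro x y hxy
  rw [merge_iff] at hxy
  split_ifs at hxy with hx hy hy
  · exact s.trans (hr hx) (s.symm (hr hy))
  · exact s.trans (s.trans (hr hx) (s.symm hab)) (hr (Quotient.exact hxy))
  · exact s.trans (hr (Quotient.exact hxy)) (s.trans hab (s.symm (hr hy)))
  · exact hr (Quotient.exact hxy)

theorem merge_eq_self (hab : r a b) : r.merge a b = r :=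
  le_antisymm (merge_le le_rfl hab) le_merge

theorem rel_swap_apply_s11 [DecidableEq α] (hab : s a b) (x : α) : s x (Equiv.swap a b x) := by
  rcases eq_or_ne x a with rfl | hxa
  · rwa [Equiv.swap_apply_left]
  rcases eq_or_ne x b with rfl | hxb
  · rw [Equiv.swap_apply_right]; exact s.symm hab
  · rw [Equiv.swap_apply_of_ne_of_ne hxa hxb]

theorem card_quotient_eq_card_quotient_merge_add_one [Finite α] (hab : ¬r a b) :
    Nat.card (Quotient r) = Nat.card (Quotient (r.merge a b)) + 1 := by
  classical
  have hrange : Set.range (fun x => if r x b then Quotient.mk r a else Quotient.mk r x) =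
      {Quotient.mk r b}ᶜ := by
    ext X
    induction X using Quotient.inductionOn with | h y => ?_
    simp only [Set.mem_range, Set.mem_compl_singleton_iff, ne_eq, Quotient.eq]
    constructor
    · rintro ⟨x, hx⟩ hyb
      split_ifs at hx with hxb
      · exact hab (r.trans (Quotient.exact hx) hyb)
      · exact hxb (r.trans (Quotient.exact hx) hyb)
    · intro hyb
      exact ⟨y, if_neg hyb⟩
  rw [merge, Nat.card_congr (quotientKerEquivRange _), hrange, Nat.card_coe_set_eq,
    Set.compl_eq_univ_sdiff, Set.ncard_sdiff_singleton_add_one (Set.mem_univ _), Set.ncard_univ]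

end Setoid

namespace Equiv.Perm

variable {α : Type*} {π σ : Perm α} {a b x y : α}

theorem orbitRel_zpowers (π : Perm α) :
    MulAction.orbitRel (Subgroup.zpowers π) α = SameCycle.setoid π := by
  ext x y
  rw [MulAction.orbitRel_apply, MulAction.mem_orbit_iff]
  constructor
  · rintro ⟨⟨_, k, rfl⟩, h⟩
    exact SameCycle.symm ⟨k, h⟩
  · rintro ⟨k, h⟩
    exact ⟨⟨π ^ (-k), -k, rfl⟩, by rw [← h]; simp⟩

theorem SameCycle.setoid_le {s : Setoid α} (h : ∀ x, s x (π x)) : SameCycle.setoid π ≤ s := by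
  rintro x _ ⟨k, rfl⟩
  induction k using Int.induction_on with
  | zero => exact s.refl x
  | succ k ih =>
    rw [add_comm, zpow_add, zpow_one, mul_apply]
    exact s.trans ih (h _)
  | pred k ih =>
    rw [sub_eq_neg_add, zpow_add, zpow_neg_one, mul_apply]
    have := h (π⁻¹ ((π ^ (-(k : ℤ))) x))
    simp only [coe_inv, apply_symm_apply] at this
    exact s.trans ih (s.symm this)

theorem merge_sameCycle_mul_swap [DecidableEq α] (σ : Perm α) (a b : α) :
    (SameCycle.setoid (σ * swap a b)).merge a b = (SameCycle.setoid σ).merge a b := by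
  have key (π : Perm α) :
      (SameCycle.setoid π).merge a b ≤ (SameCycle.setoid (π * swap a b)).merge a b := by
    refine Setoid.merge_le (SameCycle.setoid_le fun x => ?_) Setoid.merge_rel
    have hx : π x = (π * swap a b) (swap a b x) := by simp
    rw [hx]
    exact Setoid.trans' _ (Setoid.rel_swap_apply_s11 Setoid.merge_rel x)
      (Setoid.le_merge (⟨1, by simp⟩ : SameCycle _ _ _))
  refine le_antisymm ?_ (key σ)
  simpa only [mul_swap_mul_self] using key (σ * swap a b)

theorem sameCycle_iff_exists_pow_lt [Finite α] {m : ℕ} (hm0 : 0 < m) (hm : (π ^ m) x = x) :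
    π.SameCycle x y ↔ ∃ k < m, (π ^ k) x = y := by
  refine ⟨fun h => ?_, fun ⟨k, _, hk⟩ => ⟨k, by simpa using hk⟩⟩
  obtain ⟨i, rfl⟩ := h.exists_nat_pow_eq
  refine ⟨i % m, Nat.mod_lt i hm0, ?_⟩
  conv_rhs => rw [← Nat.mod_add_div i m, pow_add, pow_mul, mul_apply,
    pow_apply_eq_self_of_apply_eq_self hm]

theorem mul_swap_pow_succ_apply [DecidableEq α] {m k : ℕ}
    (h : ∀ j < m, swap a b ((σ ^ (j + 1)) b) = (σ ^ (j + 1)) b) (hk : k ≤ m) :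
    ((σ * swap a b) ^ (k + 1)) a = (σ ^ (k + 1)) b := by
  induction k with
  | zero => simp
  | succ k ih =>
    rw [pow_succ', mul_apply, ih (by omega), mul_apply, h k (by omega), ← mul_apply, ← pow_succ']

theorem sameCycle_mul_swap_iff [Finite α] [DecidableEq α] (hab : a ≠ b) :
    (σ * swap a b).SameCycle a b ↔ ¬σ.SameCycle a b := by
  have hret : ∃ j, (σ ^ (j + 1)) b = a ∨ (σ ^ (j + 1)) b = b :=
    ⟨orderOf σ - 1, Or.inr (by rw [Nat.sub_add_cancel (orderOf_pos σ), pow_orderOf_eq_one]; rfl)⟩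
  -- `m + 1` is the first return of the `σ`-orbit of `b` to `{a, b}`, and the
  -- `σ * swap a b`-orbit of `a` is `a` followed by that stretch of the `σ`-orbit of `b`.
  set m := Nat.find hret
  have hmin (j) (hj : j < m) : (σ ^ (j + 1)) b ≠ a ∧ (σ ^ (j + 1)) b ≠ b :=
    not_or.mp (Nat.find_min hret hj)
  have hwalk {k} (hk : k ≤ m) : ((σ * swap a b) ^ (k + 1)) a = (σ ^ (k + 1)) b :=
    mul_swap_pow_succ_apply (fun j hj => swap_apply_of_ne_of_ne (hmin j hj).1 (hmin j hj).2) hk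
  rcases (Nat.find_spec hret : (σ ^ (m + 1)) b = a ∨ (σ ^ (m + 1)) b = b) with hba | hbb
  · have hρ : ¬(σ * swap a b).SameCycle a b := by
      rw [sameCycle_iff_exists_pow_lt m.succ_pos ((hwalk le_rfl).trans hba)]
      rintro ⟨_ | k, hk, hkb⟩
      · exact hab hkb
      · exact (hmin k (by omega)).2 ((hwalk (by omega)).symm.trans hkb)
    have hσ : σ.SameCycle b a := ⟨(m + 1 : ℕ), by rw [zpow_natCast]; exact hba⟩
    exact iff_of_false hρ (not_not.mpr hσ.symm)
  · have hσ : ¬σ.SameCycle b a := by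
      rw [sameCycle_iff_exists_pow_lt m.succ_pos hbb]
      rintro ⟨_ | k, hk, hka⟩
      · exact hab hka.symm
      · exact (hmin k (by omega)).1 hka
    have hρ : (σ * swap a b).SameCycle a b :=
      ⟨(m + 1 : ℕ), by rw [zpow_natCast]; exact (hwalk le_rfl).trans hbb⟩
    exact iff_of_true hρ fun h => hσ h.symm

end Equiv.Perm

section orbitCount

open Equiv.Perm

variable {α : Type*} {σ : Perm α} {a b : α}

theorem orbitCount_eq_card_quotient_sameCycle (π : Perm α) :
    orbitCount π = Nat.card (Quotient (SameCycle.setoid π)) := by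
  rw [orbitCount, MulAction.orbitRel.Quotient, orbitRel_zpowers]

theorem orbitCount_mul_swap_of_sameCycle [Finite α] [DecidableEq α] (hab : a ≠ b)
    (h : σ.SameCycle a b) : orbitCount (σ * swap a b) = orbitCount σ + 1 := by
  rw [orbitCount_eq_card_quotient_sameCycle, orbitCount_eq_card_quotient_sameCycle,
    Setoid.card_quotient_eq_card_quotient_merge_add_one (a := a) (b := b)
      fun hρ => (sameCycle_mul_swap_iff hab).1 hρ h,
    merge_sameCycle_mul_swap, Setoid.merge_eq_self h]

theorem orbitCount_mul_swap_of_not_sameCycle [Finite α] [DecidableEq α] (hab : a ≠ b)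
    (h : ¬σ.SameCycle a b) : orbitCount (σ * swap a b) + 1 = orbitCount σ := by
  simpa only [mul_swap_mul_self] using
    (orbitCount_mul_swap_of_sameCycle hab ((sameCycle_mul_swap_iff hab).2 h)).symm

end orbitCount

section flipOn

variable {n : ℕ}

theorem flipOn_apply (H : Finset (Fin n)) (p : HalfEdge n) :
    flipOn n H p = if p.1 ∈ H then (p.1, !p.2) else p :=
  rfl

theorem flipOn_empty : flipOn n ∅ = 1 := by
  ext p <;> simp [flipOn_apply]

theorem flipOn_insert {H : Finset (Fin n)} {i : Fin n} (hi : i ∉ H) :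
    flipOn n (insert i H) = flipOn n H * swap (i, false) (i, true) := by
  ext ⟨j, s⟩ : 1
  rw [Perm.mul_apply, flipOn_apply, flipOn_apply]
  rcases eq_or_ne j i with rfl | hj
  · cases s <;> simp [hi]
  · rw [swap_apply_of_ne_of_ne (by simp [hj]) (by simp [hj])]
    simp [hj]

theorem flipOn_mul_flipOn_compl (Q : Finset (Fin n)) :
    flipOn n Q * flipOn n Qᶜ = flipOn n Finset.univ := by
  ext ⟨j, s⟩ : 1
  by_cases hj : j ∈ Q <;> simp [flipOn_apply, hj]

theorem abs_orbitCount_mul_flipOn_sub_le_and_even (σ : Perm (HalfEdge n)) (H : Finset (Fin n)) :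
    |(orbitCount (σ * flipOn n H) : ℤ) - orbitCount σ| ≤ H.card ∧
      Even ((orbitCount (σ * flipOn n H) : ℤ) - orbitCount σ + H.card) := by
  induction H using Finset.induction_on with
  | empty => simp [flipOn_empty]
  | @insert i H hi ih =>
    rw [flipOn_insert hi, ← mul_assoc, Finset.card_insert_of_notMem hi, abs_le, Int.even_iff]
    rw [abs_le, Int.even_iff] at ih
    have hne : ((i, false) : HalfEdge n) ≠ (i, true) := by simp
    by_cases h : (σ * flipOn n H).SameCycle (i, false) (i, true)
    · have := orbitCount_mul_swap_of_sameCycle hne h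
      push_cast
      omega
    · have := orbitCount_mul_swap_of_not_sameCycle hne h
      push_cast
      omega

theorem quasiTree_genus_bounds {σ₀ : Perm (HalfEdge n)} {Q : Finset (Fin n)}
    (hQ : faceCount σ₀ Q = 1) :
    (orbitCount σ₀ : ℤ) ≤ 1 + Q.card ∧ Even (1 - (orbitCount σ₀ : ℤ) + Q.card) ∧
      (faceCount σ₀ Finset.univ : ℤ) + Q.card ≤ n + 1 := by
  obtain ⟨hle, heven⟩ := abs_orbitCount_mul_flipOn_sub_le_and_even σ₀ Q
  obtain ⟨hle', -⟩ := abs_orbitCount_mul_flipOn_sub_le_and_even (σ₀ * flipOn n Q) Qᶜ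
  rw [mul_assoc, flipOn_mul_flipOn_compl] at hle'
  rw [faceCount] at hQ ⊢
  rw [hQ] at hle heven hle'
  have hcompl : (Qᶜ.card : ℤ) = n - Q.card := by
    rw [Finset.card_compl, Fintype.card_fin,
      Nat.cast_sub (Q.card_le_univ.trans_eq (Fintype.card_fin n))]
  rw [abs_le] at hle hle'
  refine ⟨by omega, by exact_mod_cast heven, by omega⟩

end flipOn

theorem quasi_tree_genus_bounded_general {n : ℕ} (σ₀ : Equiv.Perm (HalfEdge n))
    (g : ℕ)
    (hg : 2 * (g : ℤ) = 2 - (orbitCount σ₀ : ℤ) + n - (faceCount σ₀ Finset.univ : ℤ)) :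
    (∀ Q : Finset (Fin n), faceCount σ₀ Q = 1 →
      ∃ gQ : ℕ, 2 * (gQ : ℤ) = 1 - (orbitCount σ₀ : ℤ) + Q.card ∧ gQ ≤ g) ∧
    Nat.card {v : ℤ // ∃ Q : Finset (Fin n), faceCount σ₀ Q = 1 ∧
        2 * v = (orbitCount σ₀ : ℤ) - 1 - Q.card} ≤ g + 1 := by
  have genus (Q : Finset (Fin n)) (hQ : faceCount σ₀ Q = 1) :
      ∃ gQ : ℕ, 2 * (gQ : ℤ) = 1 - (orbitCount σ₀ : ℤ) + Q.card ∧ gQ ≤ g := by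
    obtain ⟨hpos, ⟨k, hk⟩, hle⟩ := quasiTree_genus_bounds hQ
    exact ⟨k.toNat, by omega, by omega⟩
  refine ⟨genus, ?_⟩
  calc Nat.card {v : ℤ // ∃ Q : Finset (Fin n), faceCount σ₀ Q = 1 ∧
          2 * v = (orbitCount σ₀ : ℤ) - 1 - Q.card}
      ≤ Nat.card (Set.Icc (-(g : ℤ)) 0) := by
        refine Nat.card_mono (Set.finite_Icc _ _) ?_
        rintro v ⟨Q, hQ, hv⟩
        obtain ⟨gQ, hgQ, hle⟩ := genus Q hQ
        constructor <;> omega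
    _ = g + 1 := by
        simp only [Nat.card_eq_fintype_card, Fintype.card_ofFinset, Int.card_Icc]; omega

/-- Let `𝔾` be the (connected) all-A ribbon graph of a connected link diagram, of genus
`g(𝔾)`.  Every quasi-tree `ℚ` of `𝔾` has genus `g(ℚ)` with `0 ≤ g(ℚ) ≤ g(𝔾)`;
consequently the `v`-grading `v(ℚ) = -g(ℚ)` of the quasi-tree complex (which computes
reduced Khovanov homology) takes at most `g(𝔾) + 1` values, so the reduced Khovanov
homology of the diagram has thickness at most `g(𝔾) + 1`. -/
theorem quasi_tree_genus_bounded {n : ℕ} (σ₀ : Equiv.Perm (HalfEdge n))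
    (hconn : RibbonConnected σ₀) (g : ℕ)
    (hg : 2 * (g : ℤ) = 2 - (orbitCount σ₀ : ℤ) + n - (faceCount σ₀ Finset.univ : ℤ)) :
    (∀ Q : Finset (Fin n), faceCount σ₀ Q = 1 →
      ∃ gQ : ℕ, 2 * (gQ : ℤ) = 1 - (orbitCount σ₀ : ℤ) + Q.card ∧ gQ ≤ g) ∧
    Nat.card {v : ℤ // ∃ Q : Finset (Fin n), faceCount σ₀ Q = 1 ∧
        2 * v = (orbitCount σ₀ : ℤ) - 1 - Q.card} ≤ g + 1 :=
  quasi_tree_genus_bounded_general σ₀ g hg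
end
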